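/- In the Set Cover reduction formula, the constructed CNF formula φ over variables {b₁,…,b_{k+2}, s₁,…,s_n} — with clauses β_i = (b_i) for i = 1..k+2 and σ_u = (¬b₁ ∨ … ∨ ¬b_{k+2} ∨ ⋁_{i : u ∈ S_i} s_i) for u ∈ U — has a weak recursive backdoor of depth at most k+1 to 𝒞₀ if and only if (S,U,k) is a yes-instance of Set Cover (i.e., there exist at most k sets from S = {S₁,…,S_n} whose union is U). -/

import Mathlib

/-- Variables are natural numbers. -/
abbrev Var := ℕ

/-- A CNF formula: a finite set of clause identifiers, each identifier `i`
carrying the set of variables occurring positively (`pos i`) and negatively (`neg i`). -/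
structure CNF where
  ids : Finset ℕ
  pos : ℕ → Finset Var
  neg : ℕ → Finset Var

namespace CNF

/-- The variables of clause `i`. -/
def cvars (φ : CNF) (i : ℕ) : Finset Var := φ.pos i ∪ φ.neg i

/-- The variables of the formula. -/
def vars (φ : CNF) : Finset Var := φ.ids.biUnion φ.cvars

/-- The length of the formula: the sum of clause widths. -/
def len (φ : CNF) : ℕ := ∑ i ∈ φ.ids, (φ.cvars i).card

/-- `φ ∈ 𝒞_d`: every clause has at most `d` variables. -/
def InC (φ : CNF) (d : ℕ) : Prop := ∀ i ∈ φ.ids, (φ.cvars i).card ≤ d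

/-- Assigning variable `x` to Boolean value `b`: clauses satisfied by the
assignment are removed, and `x` is removed from the remaining clauses. -/
def assign (φ : CNF) (x : Var) (b : Bool) : CNF where
  ids := φ.ids.filter fun i => x ∉ (if b then φ.pos i else φ.neg i)
  pos := fun i => (φ.pos i).erase x
  neg := fun i => (φ.neg i).erase x

/-- Assigning all variables of a set `D` according to `τ`. -/
def assignSet (φ : CNF) (D : Finset Var) (τ : Var → Bool) : CNF where
  ids := φ.ids.filter fun i => ¬ ∃ x ∈ D, if τ x then x ∈ φ.pos i else x ∈ φ.neg i
  pos := fun i => φ.pos i \ D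
  neg := fun i => φ.neg i \ D

/-- `τ` satisfies every clause of `φ`. -/
def satBy (φ : CNF) (τ : Var → Bool) : Prop :=
  ∀ i ∈ φ.ids, (∃ x ∈ φ.pos i, τ x = true) ∨ (∃ x ∈ φ.neg i, τ x = false)

/-- `φ` is satisfiable. -/
def sat (φ : CNF) : Prop := ∃ τ, φ.satBy τ

/-- The number of satisfying assignments of `φ` over its variables
(assignments are normalized to be `false` outside `vars φ`). -/
noncomputable def count (φ : CNF) : ℕ :=
  Nat.card {τ : Var → Bool // φ.satBy τ ∧ ∀ x ∉ φ.vars, τ x = false}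

/-- The incidence graph of `φ`: variable vertices `Sum.inl x` and clause
vertices `Sum.inr i`, adjacent iff `x` occurs in clause `i` of `φ`. -/
def incGraph (φ : CNF) : SimpleGraph (Var ⊕ ℕ) where
  Adj u v := match u, v with
    | Sum.inl x, Sum.inr i => i ∈ φ.ids ∧ x ∈ φ.cvars i
    | Sum.inr i, Sum.inl x => i ∈ φ.ids ∧ x ∈ φ.cvars i
    | _, _ => False
  symm := ⟨by rintro (x | i) (y | j) h <;> exact h⟩
  loopless := ⟨by rintro (x | i) h <;> exact h⟩

/-- The vertices of the incidence graph that belong to `φ`. -/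
def vertexSet (φ : CNF) : Set (Var ⊕ ℕ) :=
  {v | match v with | Sum.inl x => x ∈ φ.vars | Sum.inr i => i ∈ φ.ids}

/-- The incidence graph of `φ` is connected. -/
def Conn (φ : CNF) : Prop :=
  ∀ u ∈ φ.vertexSet, ∀ v ∈ φ.vertexSet, (incGraph φ).Reachable u v

/-- The connected component (as a subformula) of clause `i` of `φ`. -/
noncomputable def componentOf (φ : CNF) (i : ℕ) : CNF := by
  classical
  exact { ids := φ.ids.filter fun j => (incGraph φ).Reachable (Sum.inr i) (Sum.inr j),
          pos := φ.pos, neg := φ.neg }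

/-- The connected components of `φ`, as subformulas. -/
noncomputable def components (φ : CNF) : Finset CNF := by
  classical
  exact φ.ids.image φ.componentOf

/-- `ψ` is a connected component of `φ`. -/
def IsComponent (φ ψ : CNF) : Prop := ψ ∈ φ.components

end CNF

/-- `SrbdLE φ k`: the strong recursive backdoor depth of `φ` to `𝒞₀` is at most `k`.
Either `φ` is edgeless, or we may assign one variable both ways at cost one,
or we may split into connected components for free. -/
inductive SrbdLE : CNF → ℕ → Prop where
| base (φ : CNF) (k : ℕ) : φ.vars = ∅ → SrbdLE φ k
| assign (φ : CNF) (k : ℕ) (x : Var) : x ∈ φ.vars →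
    SrbdLE (φ.assign x true) k → SrbdLE (φ.assign x false) k → SrbdLE φ (k+1)
| split (φ : CNF) (k : ℕ) : (∀ ψ ∈ φ.components, SrbdLE ψ k) → SrbdLE φ k

/-- `WrbdLE φ k`: the weak recursive backdoor depth of `φ` to `𝒞₀` is at most `k`. -/
inductive WrbdLE : CNF → ℕ → Prop where
| base (φ : CNF) (k : ℕ) : φ.vars = ∅ → φ.sat → WrbdLE φ k
| assign (φ : CNF) (k : ℕ) (x : Var) (b : Bool) : x ∈ φ.vars →
    WrbdLE (φ.assign x b) k → WrbdLE φ (k+1)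
| split (φ : CNF) (k : ℕ) : (∀ ψ ∈ φ.components, WrbdLE ψ k) → WrbdLE φ k

/-- A strong recursive backdoor tree of `φ` to the class `C`:
leaves are formulas in `C`; a variable node branches on both assignments of a
variable of `φ`; a component node has one child per connected component. -/
inductive SRB (C : Set CNF) : CNF → Type where
| leaf : (φ : CNF) → φ ∈ C → SRB C φ
| varNode : (φ : CNF) → (x : Var) → x ∈ φ.vars →
    SRB C (φ.assign x true) → SRB C (φ.assign x false) → SRB C φ
| compNode : (φ : CNF) → ((ψ : CNF) → ψ ∈ φ.components → SRB C ψ) → SRB C φ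

namespace SRB

variable {C : Set CNF}

/-- The depth of a strong recursive backdoor: the maximal number of variable
nodes on a root-to-leaf path. -/
noncomputable def depth : {φ : CNF} → SRB C φ → ℕ
| _, .leaf _ _ => 0
| _, .varNode _ _ _ l r => 1 + max (depth l) (depth r)
| _, .compNode φ f => φ.components.attach.sup fun ψ => depth (f ψ.1 ψ.2)

/-- The number of leaf nodes of a strong recursive backdoor. -/
noncomputable def leaves : {φ : CNF} → SRB C φ → ℕ
| _, .leaf _ _ => 1
| _, .varNode _ _ _ l r => leaves l + leaves r
| _, .compNode φ f => ∑ ψ ∈ φ.components.attach, leaves (f ψ.1 ψ.2)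

/-- Bottom-up satisfiability evaluation of a strong recursive backdoor:
a leaf evaluates to the satisfiability of its formula, a variable node to the
disjunction of its children, a component node to the conjunction of its children. -/
def eval : {φ : CNF} → SRB C φ → Prop
| _, .leaf φ _ => φ.sat
| _, .varNode _ _ _ l r => eval l ∨ eval r
| _, .compNode φ f => ∀ (ψ : CNF) (h : ψ ∈ φ.components), eval (f ψ h)

/-- Bottom-up model counting: a leaf contributes its model count, a variable
node the sum over both polarities (corrected by factors `2^e` for variables
disappearing from all clauses), a component node the product over components. -/
noncomputable def countEval : {φ : CNF} → SRB C φ → ℕ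
| _, .leaf φ _ => φ.count
| _, .varNode φ x _ l r =>
    2 ^ (((φ.vars.erase x) \ (φ.assign x true).vars).card) * countEval l
  + 2 ^ (((φ.vars.erase x) \ (φ.assign x false).vars).card) * countEval r
| _, .compNode φ f => ∏ ψ ∈ φ.components.attach, countEval (f ψ.1 ψ.2)

end SRB

/-- The underlying data of an obstruction-tree: a base clause, or two
obstruction-trees joined by a path (a list of incidence-graph vertices). -/
inductive ObsTree : Type where
| base : ℕ → ObsTree
| node : ObsTree → ObsTree → List (Var ⊕ ℕ) → ObsTree

namespace ObsTree

/-- The elements `V(T)` of an obstruction-tree, relative to formula `φ`. -/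
def elts (φ : CNF) : ObsTree → Finset (Var ⊕ ℕ)
| .base i => insert (Sum.inr i) ((φ.cvars i).image Sum.inl)
| .node T₁ T₂ P => elts φ T₁ ∪ elts φ T₂ ∪ P.toFinset

/-- The variables `var(T)` among the elements of `T`. -/
def varSet (φ : CNF) (T : ObsTree) : Finset Var :=
  (T.elts φ).biUnion fun v => match v with | Sum.inl x => {x} | Sum.inr _ => ∅

/-- The clauses `cla(T)` among the elements of `T`. -/
def claSet (φ : CNF) (T : ObsTree) : Finset ℕ :=
  (T.elts φ).biUnion fun v => match v with | Sum.inl _ => ∅ | Sum.inr i => {i}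

/-- The destroy-neighborhood `N†_φ(T)`. -/
def nd (φ : CNF) : ObsTree → Finset Var
| .base i => φ.cvars i
| .node T₁ T₂ P =>
    (ObsTree.node T₁ T₂ P).varSet φ ∪
    (((ObsTree.node T₁ T₂ P).claSet φ).biUnion φ.pos ∩
      ((ObsTree.node T₁ T₂ P).claSet φ).biUnion φ.neg)

end ObsTree

/-- `IsObsTree φ d k i T`: `T` is an `(i,d,k)`-obstruction-tree of `φ`.
A clause of width exactly `d` (with its variables) is a `(d,d,k)`-obstruction-tree;
two `(i,d,k)`-obstruction-trees with disjoint destroy-neighborhoods joined by a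
path of length at most `λ_k = 4·2^k` form an `(i+1,d,k)`-obstruction-tree. -/
inductive IsObsTree (φ : CNF) (d k : ℕ) : ℕ → ObsTree → Prop where
| base (i : ℕ) : i ∈ φ.ids → (φ.cvars i).card = d → IsObsTree φ d k d (.base i)
| node (i : ℕ) (T₁ T₂ : ObsTree) (P : List (Var ⊕ ℕ)) :
    IsObsTree φ d k i T₁ → IsObsTree φ d k i T₂ →
    Disjoint (T₁.nd φ) (T₂.nd φ) →
    P.Chain' (CNF.incGraph φ).Adj → P.Nodup →
    (hne : P ≠ []) →
    P.head hne ∈ T₁.elts φ → P.getLast hne ∈ T₂.elts φ →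
    P.length ≤ 4 * 2 ^ k + 1 →
    IsObsTree φ d k (i+1) (.node T₁ T₂ P)

/-- The Set Cover reduction formula: variables `b_i` are `1,…,k+2`, variables
`s_j` are `k+2+j` for `j = 1,…,n`; clause `β_i = (b_i)` has id `i` for
`i = 1,…,k+2`, and clause `σ_u = (¬b₁ ∨ … ∨ ¬b_{k+2} ∨ ⋁_{j : u ∈ S j} s_j)`
has id `k+3+u` for `u ∈ U`. -/
def scFormula (n k : ℕ) (U : Finset ℕ) (S : ℕ → Finset ℕ) : CNF where
  ids := Finset.Icc 1 (k + 2) ∪ U.image (fun u => k + 3 + u)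
  pos := fun i =>
    if i ≤ k + 2 then {i}
    else ((Finset.Icc 1 n).filter fun j => i - (k + 3) ∈ S j).image fun j => k + 2 + j
  neg := fun i => if i ≤ k + 2 then ∅ else Finset.Icc 1 (k + 2)

/-!
Every clause `σ_u` contains all the variables `b₁, …, b_{k+2}`, so as long as some `σ_u` is
present and some `b_i` is unassigned the incidence graph is connected and splitting into
components gains nothing. Setting a `b_i` false leaves the empty clause `β_i`, and the unit
clauses `β_i` keep the formula from becoming edgeless while some `b_i` is unassigned. Within
depth `k + 1` not all `k + 2` variables `b_i` can be set, so a weak backdoor must remove every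
`σ_u` by setting true at most `k` variables `s_j`: a set cover. Conversely, once the `s_j` of a
cover are set true, only the pairwise variable-disjoint unit clauses `β_i` remain, and one more
level satisfies each of them.

Formulas reached from `scFormula` by successive assignments are tracked as
`(scFormula n k U S).assignSet D ρ`, using `CNF.assign_assignSet`.
-/

open Finset

namespace CNF

variable {φ : CNF} {D : Finset Var} {ρ : Var → Bool} {x : Var} {b : Bool} {i : ℕ}

@[ext]
theorem ext {ψ : CNF} (hids : φ.ids = ψ.ids) (hpos : φ.pos = ψ.pos) (hneg : φ.neg = ψ.neg) :
    φ = ψ := by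
  cases φ; cases ψ; simp_all

theorem mem_assign_ids :
    i ∈ (φ.assign x b).ids ↔ i ∈ φ.ids ∧ x ∉ (if b then φ.pos i else φ.neg i) :=
  mem_filter

theorem mem_assignSet_ids :
    i ∈ (φ.assignSet D ρ).ids ↔
      i ∈ φ.ids ∧ ∀ y ∈ D, y ∉ (if ρ y then φ.pos i else φ.neg i) := by
  simp only [assignSet, mem_filter, not_exists, not_and]
  refine and_congr_right fun _ => forall₂_congr fun y _ => ?_
  split <;> rfl

theorem cvars_assignSet : (φ.assignSet D ρ).cvars i = φ.cvars i \ D :=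
  (union_sdiff_distrib _ _ _).symm

@[simp]
theorem assignSet_empty : φ.assignSet ∅ ρ = φ := by
  ext i <;> simp [assignSet]

theorem assign_assignSet (hx : x ∉ D) :
    (φ.assignSet D ρ).assign x b = φ.assignSet (insert x D) (Function.update ρ x b) := by
  ext i
  · simp only [mem_assign_ids, mem_assignSet_ids, forall_mem_insert, Function.update_self]
    have hne : ∀ y ∈ D, y ≠ x := fun y hy h => hx (h ▸ hy)
    cases b <;> simp +contextual [assignSet, hx, hne, Function.update_of_ne] <;> tauto
  · simp [assign, assignSet, sdiff_insert]
  · simp [assign, assignSet, sdiff_insert]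

theorem mem_vars : x ∈ φ.vars ↔ ∃ i ∈ φ.ids, x ∈ φ.cvars i := mem_biUnion

theorem mem_vars_of_mem_assignSet_vars (hx : x ∈ (φ.assignSet D ρ).vars) :
    x ∈ φ.vars ∧ x ∉ D := by
  obtain ⟨i, hi, hxi⟩ := mem_vars.mp hx
  rw [cvars_assignSet, mem_sdiff] at hxi
  exact ⟨mem_vars.mpr ⟨i, (mem_assignSet_ids.mp hi).1, hxi.1⟩, hxi.2⟩


theorem cvars_assign : (φ.assign x b).cvars i = (φ.cvars i).erase x :=
  (erase_union_distrib _ _ _).symm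

theorem mem_componentOf_ids {j : ℕ} :
    j ∈ (φ.componentOf i).ids ↔ j ∈ φ.ids ∧ (incGraph φ).Reachable (.inr i) (.inr j) := by
  simp [componentOf]

theorem self_mem_componentOf_ids (hi : i ∈ φ.ids) : i ∈ (φ.componentOf i).ids :=
  mem_componentOf_ids.mpr ⟨hi, .rfl⟩

theorem componentOf_mem_components (hi : i ∈ φ.ids) : φ.componentOf i ∈ φ.components := by
  classical
  unfold components
  exact mem_image_of_mem _ hi

theorem mem_components {ψ : CNF} : ψ ∈ φ.components ↔ ∃ i ∈ φ.ids, φ.componentOf i = ψ := by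
  classical
  unfold components
  exact mem_image

theorem self_mem_components (hi : i ∈ φ.ids)
    (h : ∀ j ∈ φ.ids, (incGraph φ).Reachable (.inr i) (.inr j)) : φ ∈ φ.components := by
  have hself : φ.componentOf i = φ := by
    ext j <;> simp +contextual [componentOf, h]
  simpa only [hself] using componentOf_mem_components hi

theorem reachable_of_mem_cvars {j : ℕ} (hi : i ∈ φ.ids) (hj : j ∈ φ.ids)
    (hxi : x ∈ φ.cvars i) (hxj : x ∈ φ.cvars j) :
    (incGraph φ).Reachable (.inr i) (.inr j) := by
  have hix : (incGraph φ).Adj (.inr i) (.inl x) := ⟨hi, hxi⟩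
  have hxj : (incGraph φ).Adj (.inl x) (.inr j) := ⟨hj, hxj⟩
  exact hix.reachable.trans hxj.reachable

theorem componentOf_ids_eq_singleton (hi : i ∈ φ.ids)
    (hdisj : ∀ j ∈ φ.ids, j ≠ i → Disjoint (φ.cvars i) (φ.cvars j)) :
    (φ.componentOf i).ids = {i} := by
  have reach : ∀ v, (incGraph φ).Reachable (.inr i) v →
      v = .inr i ∨ ∃ x ∈ φ.cvars i, v = .inl x := by
    intro v h
    rw [SimpleGraph.reachable_iff_reflTransGen] at h
    induction h with
    | refl => exact .inl rfl
    | @tail v w _ hvw ih =>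
      rcases ih with rfl | ⟨x, hx, rfl⟩ <;> rcases w with y | j
      · exact .inr ⟨y, hvw.2, rfl⟩
      · exact hvw.elim
      · exact hvw.elim
      · by_contra hj
        exact disjoint_left.mp (hdisj j hvw.1 (by simpa using hj)) hx hvw.2
  ext j
  simp only [mem_componentOf_ids, mem_singleton]
  refine ⟨fun ⟨_, hj⟩ => by simpa using reach _ hj, ?_⟩
  rintro rfl
  exact ⟨hi, .rfl⟩

end CNF

namespace WrbdLE

variable {φ : CNF} {m : ℕ}

theorem mono (h : WrbdLE φ m) {m' : ℕ} (hm : m ≤ m') : WrbdLE φ m' := by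
  induction h generalizing m' with
  | base φ _ hv hs => exact base φ m' hv hs
  | assign φ _ x b hx _ ih =>
    obtain ⟨m', rfl⟩ : ∃ m'', m' = m'' + 1 := ⟨m' - 1, by omega⟩
    exact assign φ m' x b hx (ih (by omega))
  | split φ _ _ ih => exact split φ m' fun ψ hψ => ih ψ hψ hm

theorem vars_eq_empty (h : WrbdLE φ 0) : φ.vars = ∅ := by
  generalize hm : 0 = m at h
  induction h with
  | base => assumption
  | assign => omega
  | split φ _ _ ih =>
    refine eq_empty_of_forall_notMem fun x hx => ?_
    obtain ⟨i, hi, hxi⟩ := CNF.mem_vars.mp hx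
    have hψ := ih _ (CNF.componentOf_mem_components hi) hm
    exact (eq_empty_iff_forall_notMem.mp hψ) x
      (CNF.mem_vars.mpr ⟨i, CNF.self_mem_componentOf_ids hi, hxi⟩)

theorem cvars_nonempty (h : WrbdLE φ m) {i : ℕ} (hi : i ∈ φ.ids) : (φ.cvars i).Nonempty := by
  induction h generalizing i with
  | base φ _ _ hs =>
    obtain ⟨τ, hτ⟩ := hs
    rcases hτ i hi with ⟨x, hx, -⟩ | ⟨x, hx, -⟩
    · exact ⟨x, mem_union_left _ hx⟩
    · exact ⟨x, mem_union_right _ hx⟩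
  | assign φ _ x b _ _ ih =>
    by_contra hempty
    rw [not_nonempty_iff_eq_empty] at hempty
    have hi' : i ∈ (φ.assign x b).ids := by
      rw [CNF.mem_assign_ids]
      have := union_eq_empty.mp hempty
      cases b <;> simp [hi, this]
    simpa [CNF.cvars_assign, hempty] using ih hi'
  | split φ _ _ ih =>
    exact ih _ (CNF.componentOf_mem_components hi) (CNF.self_mem_componentOf_ids hi)

theorem not_assign_of_falsified {x : Var} {b : Bool} {i : ℕ} (hi : i ∈ φ.ids)
    (hcv : φ.cvars i ⊆ {x}) (hx : x ∉ if b then φ.pos i else φ.neg i) :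
    ¬ WrbdLE (φ.assign x b) m := fun h => by
  obtain ⟨y, hy⟩ := h.cvars_nonempty (CNF.mem_assign_ids.mpr ⟨hi, hx⟩)
  rw [CNF.cvars_assign, mem_erase] at hy
  exact hy.1 (mem_singleton.mp (hcv hy.2))

theorem of_pairwiseDisjoint (hpos : ∀ i ∈ φ.ids, (φ.pos i).Nonempty)
    (hdisj : ∀ i ∈ φ.ids, ∀ j ∈ φ.ids, j ≠ i → Disjoint (φ.cvars i) (φ.cvars j)) :
    WrbdLE φ (m + 1) := by
  refine split φ _ fun ψ hψ => ?_
  obtain ⟨i, hi, rfl⟩ := CNF.mem_components.mp hψ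
  have hids := CNF.componentOf_ids_eq_singleton hi (hdisj i hi)
  obtain ⟨x, hx⟩ := hpos i hi
  have hsat : ((φ.componentOf i).assign x true).ids = ∅ := by
    ext j
    simp only [CNF.mem_assign_ids, hids, mem_singleton, if_true, notMem_empty, iff_false]
    rintro ⟨rfl, hj⟩
    exact hj hx
  refine assign _ m x true ?_ (base _ m (by simp [CNF.vars, hsat]) ⟨fun _ => true, ?_⟩)
  · exact CNF.mem_vars.mpr ⟨i, by simp [hids], mem_union_left _ hx⟩
  · intro j hj
    simp [hsat] at hj

end WrbdLE

section SetCover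

variable {n k : ℕ} {U : Finset ℕ} {S : ℕ → Finset ℕ} {D : Finset Var} {ρ : Var → Bool}

theorem mem_scFormula_ids {i : ℕ} :
    i ∈ (scFormula n k U S).ids ↔ i ∈ Icc 1 (k + 2) ∨ ∃ u ∈ U, k + 3 + u = i := by
  simp [scFormula]

theorem scFormula_pos_of_le {b : ℕ} (hb : b ≤ k + 2) : (scFormula n k U S).pos b = {b} :=
  if_pos hb

theorem scFormula_neg_of_le {b : ℕ} (hb : b ≤ k + 2) : (scFormula n k U S).neg b = ∅ :=
  if_pos hb

theorem mem_scFormula_pos_sigma {u x : ℕ} :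
    x ∈ (scFormula n k U S).pos (k + 3 + u) ↔ ∃ j ∈ Icc 1 n, u ∈ S j ∧ k + 2 + j = x := by
  simp [scFormula, show ¬k + 3 + u ≤ k + 2 by omega, and_assoc]

theorem scFormula_neg_sigma (u : ℕ) : (scFormula n k U S).neg (k + 3 + u) = Icc 1 (k + 2) :=
  if_neg (by omega)

theorem mem_scFormula_vars {x : ℕ} (hx : x ∈ (scFormula n k U S).vars) :
    x ∈ Icc 1 (k + 2) ∨ ∃ j ∈ Icc 1 n, k + 2 + j = x := by
  obtain ⟨i, hi, hxi⟩ := CNF.mem_vars.mp hx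
  rcases mem_scFormula_ids.mp hi with hb | ⟨u, -, rfl⟩
  · simp_all [CNF.cvars, scFormula_pos_of_le (mem_Icc.mp hb).2,
      scFormula_neg_of_le (mem_Icc.mp hb).2]
  · rcases mem_union.mp hxi with hx | hx
    · obtain ⟨j, hj, -, rfl⟩ := mem_scFormula_pos_sigma.mp hx
      exact .inr ⟨j, hj, rfl⟩
    · exact .inl (scFormula_neg_sigma u ▸ hx)

theorem scFormula_assignSet_cvars_beta {b : ℕ} (hb : b ≤ k + 2) :
    ((scFormula n k U S).assignSet D ρ).cvars b = {b} \ D := by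
  rw [CNF.cvars_assignSet, CNF.cvars, scFormula_pos_of_le hb, scFormula_neg_of_le hb, union_empty]

theorem scFormula_assignSet_beta_mem_ids {b : ℕ} (hb : b ∈ Icc 1 (k + 2)) (hbD : b ∉ D) :
    b ∈ ((scFormula n k U S).assignSet D ρ).ids := by
  refine CNF.mem_assignSet_ids.mpr ⟨mem_scFormula_ids.mpr (.inl hb), fun y hy => ?_⟩
  have hyb : y ≠ b := fun h => hbD (h ▸ hy)
  split <;> simp [scFormula_pos_of_le (mem_Icc.mp hb).2, scFormula_neg_of_le (mem_Icc.mp hb).2, hyb]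

theorem scFormula_assignSet_beta_mem_vars {b : ℕ} (hb : b ∈ Icc 1 (k + 2)) (hbD : b ∉ D) :
    b ∈ ((scFormula n k U S).assignSet D ρ).vars :=
  CNF.mem_vars.mpr ⟨b, scFormula_assignSet_beta_mem_ids hb hbD, by
    simp [scFormula_assignSet_cvars_beta (mem_Icc.mp hb).2, hbD]⟩

theorem scFormula_assignSet_beta_mem_cvars_sigma {b : ℕ} (u : ℕ) (hb : b ∈ Icc 1 (k + 2))
    (hbD : b ∉ D) : b ∈ ((scFormula n k U S).assignSet D ρ).cvars (k + 3 + u) := by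
  rw [CNF.cvars_assignSet]
  exact mem_sdiff.mpr ⟨mem_union_right _ (scFormula_neg_sigma u ▸ hb), hbD⟩

theorem scFormula_assignSet_sigma_removed {u x : ℕ} {c : Bool}
    (halive : k + 3 + u ∈ ((scFormula n k U S).assignSet D ρ).ids)
    (hremoved : k + 3 + u ∉ (((scFormula n k U S).assignSet D ρ).assign x c).ids) :
    (x ∈ Icc 1 (k + 2) ∧ c = false) ∨ (∃ j ∈ Icc 1 n, u ∈ S j ∧ k + 2 + j = x ∧ c = true) := by
  rw [CNF.mem_assign_ids, not_and, not_not] at hremoved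
  have hx := hremoved halive
  cases c
  · simp_all [CNF.assignSet, scFormula_neg_sigma]
  · simp_all [CNF.assignSet, mem_scFormula_pos_sigma]

theorem wrbdLE_scFormula_assignSet_of_cover {J : Finset ℕ} (hJ : J ⊆ Icc 1 n) (D : Finset Var)
    (hcover : ∀ u ∈ U, k + 3 + u ∈ ((scFormula n k U S).assignSet D fun _ => true).ids →
      u ∈ J.biUnion S) :
    WrbdLE ((scFormula n k U S).assignSet D fun _ => true) (#J + 1) := by
  induction J using Finset.strongInduction generalizing D with
  | H J ih =>
  set G := (scFormula n k U S).assignSet D fun _ => true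
  by_cases halive : ∃ u ∈ U, k + 3 + u ∈ G.ids
  · obtain ⟨u, hu, hσ⟩ := halive
    obtain ⟨j, hj, huj⟩ := mem_biUnion.mp (hcover u hu hσ)
    have hxpos : k + 2 + j ∈ (scFormula n k U S).pos (k + 3 + u) :=
      mem_scFormula_pos_sigma.mpr ⟨j, hJ hj, huj, rfl⟩
    have hxD : k + 2 + j ∉ D := fun hxD => (CNF.mem_assignSet_ids.mp hσ).2 _ hxD hxpos
    have hx : k + 2 + j ∈ G.vars := CNF.mem_vars.mpr ⟨_, hσ, by
      rw [CNF.cvars_assignSet]; exact mem_sdiff.mpr ⟨mem_union_left _ hxpos, hxD⟩⟩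
    have hG' : G.assign (k + 2 + j) true =
        (scFormula n k U S).assignSet (insert (k + 2 + j) D) fun _ => true := by
      rw [CNF.assign_assignSet hxD, Function.update_eq_self_iff.mpr rfl]
    rw [← card_erase_add_one hj]
    refine .assign G _ _ true hx (hG' ▸ ih _ (erase_ssubset hj) ((erase_subset _ _).trans hJ) _ ?_)
    intro u hu hσ'
    rw [← hG', CNF.mem_assign_ids] at hσ'
    obtain ⟨j', hj', huj'⟩ := mem_biUnion.mp (hcover u hu hσ'.1)
    refine mem_biUnion.mpr ⟨j', mem_erase.mpr ⟨?_, hj'⟩, huj'⟩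
    rintro rfl
    exact hσ'.2 (mem_sdiff.mpr ⟨mem_scFormula_pos_sigma.mpr ⟨j', hJ hj', huj', rfl⟩, hxD⟩)
  · simp only [not_exists, not_and] at halive
    have hbeta : ∀ i ∈ G.ids, i ≤ k + 2 ∧ i ∉ D := by
      intro i hi
      rcases mem_scFormula_ids.mp (CNF.mem_assignSet_ids.mp hi).1 with hb | ⟨u, hu, rfl⟩
      · have hb := (mem_Icc.mp hb).2
        refine ⟨hb, fun hD => (CNF.mem_assignSet_ids.mp hi).2 i hD ?_⟩
        simp [scFormula_pos_of_le hb]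
      · exact absurd hi (halive u hu)
    refine WrbdLE.of_pairwiseDisjoint (fun i hi => ?_) fun i hi j hj hji => ?_
    · exact ⟨i, mem_sdiff.mpr ⟨by simp [scFormula_pos_of_le (hbeta i hi).1], (hbeta i hi).2⟩⟩
    · rw [scFormula_assignSet_cvars_beta (hbeta i hi).1,
        scFormula_assignSet_cvars_beta (hbeta j hj).1]
      exact (disjoint_singleton.mpr hji.symm).mono sdiff_subset sdiff_subset

/-- By `hm` some `b` stays unassigned: its clause `β_b` keeps the formula from becoming edgeless,
and its literal in every `σ_u` keeps the formula connected. -/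
theorem exists_cover_of_wrbdLE_scFormula_assignSet {G : CNF} {m : ℕ} (h : WrbdLE G m)
    (D : Finset Var) (ρ : Var → Bool) (hG : G = (scFormula n k U S).assignSet D ρ)
    (hm : m < #(Icc 1 (k + 2) \ D)) :
    ∃ J ⊆ Icc 1 n, #J < m ∧ ∀ u ∈ U, k + 3 + u ∈ G.ids → u ∈ J.biUnion S := by
  induction h generalizing D ρ with
  | base G m hvars _ =>
    subst hG
    obtain ⟨b, hb⟩ := card_pos.mp (Nat.zero_lt_of_lt hm)
    rw [mem_sdiff] at hb
    exact absurd (hvars ▸ scFormula_assignSet_beta_mem_vars hb.1 hb.2) (notMem_empty b)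
  | assign G m x c hx hG' ih =>
    subst hG
    obtain ⟨hxF, hxD⟩ := CNF.mem_vars_of_mem_assignSet_vars hx
    obtain ⟨J, hJ, hJm, hcover⟩ := ih (insert x D) (Function.update ρ x c)
      (CNF.assign_assignSet hxD) (by
        have := pred_card_le_card_erase (s := Icc 1 (k + 2) \ D) (a := x)
        rw [sdiff_insert]; omega)
    rcases mem_scFormula_vars hxF with hxb | ⟨j, hj, rfl⟩
    · have hc : c = true := by
        cases c
        · refine absurd hG' (WrbdLE.not_assign_of_falsified
            (scFormula_assignSet_beta_mem_ids hxb hxD) ?_ ?_)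
          · rw [scFormula_assignSet_cvars_beta (mem_Icc.mp hxb).2]; exact sdiff_subset
          · simp [CNF.assignSet, scFormula_neg_of_le (mem_Icc.mp hxb).2]
        · rfl
      refine ⟨J, hJ, ?_, fun u hu hσ => ?_⟩
      · exact Nat.lt_succ_of_lt hJm
      by_cases hσ' : k + 3 + u ∈ (((scFormula n k U S).assignSet D ρ).assign x c).ids
      · exact hcover u hu hσ'
      · rcases scFormula_assignSet_sigma_removed hσ hσ' with ⟨-, hc'⟩ | ⟨j, hj, -, rfl, -⟩
        · simp_all
        · rw [mem_Icc] at hxb hj; omega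
    · refine ⟨insert j J, insert_subset hj hJ, (card_insert_le _ _).trans_lt (by omega),
        fun u hu hσ => ?_⟩
      by_cases hσ' : k + 3 + u ∈ (((scFormula n k U S).assignSet D ρ).assign (k + 2 + j) c).ids
      · exact biUnion_subset_biUnion_of_subset_left _ (subset_insert j J) (hcover u hu hσ')
      · rcases scFormula_assignSet_sigma_removed hσ hσ' with ⟨hxb, -⟩ | ⟨j', -, huj', hjj', -⟩
        · rw [mem_Icc] at hxb hj; omega
        · exact mem_biUnion.mpr ⟨j, mem_insert_self _ _, (by omega : j' = j) ▸ huj'⟩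
  | split G m hcomp ih =>
    subst hG
    have hG : WrbdLE _ m := .split _ m hcomp
    obtain ⟨b, hb⟩ := card_pos.mp (Nat.zero_lt_of_lt hm)
    rw [mem_sdiff] at hb
    by_cases halive : ∃ u ∈ U, k + 3 + u ∈ ((scFormula n k U S).assignSet D ρ).ids
    · obtain ⟨u, -, hσ⟩ := halive
      refine ih _ (CNF.self_mem_components hσ fun i hi => ?_) D ρ rfl hm
      rcases mem_scFormula_ids.mp (CNF.mem_assignSet_ids.mp hi).1 with hb' | ⟨u', -, rfl⟩
      · have hb'D : i ∉ D := by
          obtain ⟨y, hy⟩ := hG.cvars_nonempty hi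
          rw [scFormula_assignSet_cvars_beta (mem_Icc.mp hb').2, mem_sdiff, mem_singleton] at hy
          exact hy.1 ▸ hy.2
        refine CNF.reachable_of_mem_cvars hσ hi
          (scFormula_assignSet_beta_mem_cvars_sigma u hb' hb'D) ?_
        simp [scFormula_assignSet_cvars_beta (mem_Icc.mp hb').2, hb'D]
      · exact CNF.reachable_of_mem_cvars hσ hi
          (scFormula_assignSet_beta_mem_cvars_sigma u hb.1 hb.2)
          (scFormula_assignSet_beta_mem_cvars_sigma u' hb.1 hb.2)
    · refine ⟨∅, empty_subset _, Nat.pos_of_ne_zero ?_, fun u hu hσ => absurd ⟨u, hu, hσ⟩ halive⟩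
      rintro rfl
      exact notMem_empty b (hG.vars_eq_empty ▸ scFormula_assignSet_beta_mem_vars hb.1 hb.2)

end SetCover

theorem setCover_reduction_general (n k : ℕ) (U : Finset ℕ) (S : ℕ → Finset ℕ) :
    WrbdLE (scFormula n k U S) (k + 1) ↔
      ∃ J ⊆ Finset.Icc 1 n, J.card ≤ k ∧ U ⊆ J.biUnion S := by
  constructor
  · intro h
    obtain ⟨J, hJ, hcard, hcover⟩ := exists_cover_of_wrbdLE_scFormula_assignSet h ∅
      (fun _ => true) CNF.assignSet_empty.symm (by simp)
    exact ⟨J, hJ, by omega, fun u hu => hcover u hu (mem_scFormula_ids.mpr (.inr ⟨u, hu, rfl⟩))⟩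
  · rintro ⟨J, hJ, hcard, hcover⟩
    have h := wrbdLE_scFormula_assignSet_of_cover (k := k) hJ ∅ fun u hu _ => hcover hu
    rw [CNF.assignSet_empty] at h
    exact h.mono (by omega)

/-- the Set Cover reduction formula has a weak recursive
backdoor of depth at most `k+1` to `𝒞₀` iff `(S,U,k)` is a yes-instance of
Set Cover. -/
theorem setCover_reduction (n k : ℕ) (U : Finset ℕ) (S : ℕ → Finset ℕ)
    (hS : ∀ j ∈ Finset.Icc 1 n, S j ⊆ U) :
    WrbdLE (scFormula n k U S) (k + 1) ↔
      ∃ J ⊆ Finset.Icc 1 n, J.card ≤ k ∧ U ⊆ J.biUnion S :=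
  setCover_reduction_general n k U S
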